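/- arXiv:2402.13675 — 2 statements merged into one kernel-verified Lean document; each statement's English description precedes it below -/
import Mathlib

section
/- Let $G(x_1,\dots,x_m)=\sum_{\upsilon_1,\dots,\upsilon_m\in\{0,1\}} g_{\upsilon_1,\dots,\upsilon_m} x_1^{\upsilon_1}\cdots x_m^{\upsilon_m}$ be a multilinear polynomial with real coefficients. Then for any real numbers $0<t_{i,0}<t_{i,1}$ for $i=1,\dots,m$, one has $\sum_{\upsilon_1,\dots,\upsilon_m\in\{0,1\}} |g_{\upsilon_1,\dots,\upsilon_m}| \le \prod_{i=1}^m \frac{1+t_{i,1}}{t_{i,1}-t_{i,0}} \sum_{\upsilon_1,\dots,\upsilon_m\in\{0,1\}} |G(t_{1,\upsilon_1},\dots,t_{m,\upsilon_m})|.$ -/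
/-! Induction on `m`. Splitting off the first variable writes `G = G₀ + x₁ G₁`, where `G₀, G₁`
are multilinear in the remaining variables with coefficients `g_{0,υ'}` and `g_{1,υ'}`.
For `A_c = a + b t_c` one has `(t₁ - t₀) |b| = |A₁ - A₀|` and `(t₁ - t₀) |a| = |t₁ A₀ - t₀ A₁|`,
which bounds `|a| + |b|` by `(1 + t₁) / (t₁ - t₀) (|A₀| + |A₁|)`; apply this to `a = G₀`,
`b = G₁` at each point of the remaining grid and the induction hypothesis to `G₀` and `G₁`. -/

open Finset

def multilinearEval {m : ℕ} (g : (Fin m → Bool) → ℝ) (x : Fin m → ℝ) : ℝ :=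
  ∑ w : Fin m → Bool, g w * ∏ i, (if w i then x i else 1)

theorem Fintype.sum_fun_fin_succ {α M : Type*} [Fintype α] [AddCommMonoid M] {n : ℕ}
    (f : (Fin (n + 1) → α) → M) :
    ∑ x : Fin (n + 1) → α, f x = ∑ a : α, ∑ x : Fin n → α, f (Fin.cons a x) := by
  rw [← (Fin.consEquiv fun _ => α).sum_comp, Fintype.sum_prod_type]
  rfl

theorem Fintype.sum_bool_fun_fin_succ {M : Type*} [AddCommMonoid M] {n : ℕ}
    (f : (Fin (n + 1) → Bool) → M) :
    ∑ x : Fin (n + 1) → Bool, f x =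
      ∑ x : Fin n → Bool, (f (Fin.cons false x) + f (Fin.cons true x)) := by
  rw [Fintype.sum_fun_fin_succ, Fintype.sum_bool, add_comm, sum_add_distrib]

theorem multilinearEval_cons {m : ℕ} (g : (Fin (m + 1) → Bool) → ℝ) (x₀ : ℝ) (x : Fin m → ℝ) :
    multilinearEval g (Fin.cons x₀ x) =
      multilinearEval (fun w => g (Fin.cons false w)) x +
        multilinearEval (fun w => g (Fin.cons true w)) x * x₀ := by
  simp only [multilinearEval, Fintype.sum_bool_fun_fin_succ, Fin.prod_univ_succ, Fin.cons_zero,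
    Fin.cons_succ, sum_mul, ← sum_add_distrib]
  refine sum_congr rfl fun w _ => ?_
  simp only [Bool.false_eq_true, if_false, if_true]
  ring

theorem abs_add_abs_le_of_affine_at_two_points {a b t₀ t₁ : ℝ} (h₀ : 0 ≤ t₀) (h : t₀ < t₁) :
    |a| + |b| ≤ (1 + t₁) / (t₁ - t₀) * (|a + b * t₀| + |a + b * t₁|) := by
  have hpos : 0 < t₁ - t₀ := sub_pos.mpr h
  have hb : |b| * (t₁ - t₀) ≤ |a + b * t₀| + |a + b * t₁| := by
    calc |b| * (t₁ - t₀) = |(a + b * t₁) - (a + b * t₀)| := by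
          rw [← abs_of_pos hpos, ← abs_mul]; ring_nf
      _ ≤ |a + b * t₀| + |a + b * t₁| := (abs_sub _ _).trans_eq (add_comm _ _)
  have ha : |a| * (t₁ - t₀) ≤ t₁ * (|a + b * t₀| + |a + b * t₁|) := by
    calc |a| * (t₁ - t₀) = |t₁ * (a + b * t₀) - t₀ * (a + b * t₁)| := by
          rw [← abs_of_pos hpos, ← abs_mul]; ring_nf
      _ ≤ t₁ * |a + b * t₀| + t₀ * |a + b * t₁| := by
          refine (abs_sub _ _).trans (le_of_eq ?_)
          rw [abs_mul, abs_mul, abs_of_nonneg (h₀.trans h.le), abs_of_nonneg h₀]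
      _ ≤ t₁ * (|a + b * t₀| + |a + b * t₁|) := by
          rw [mul_add]; gcongr
  rw [div_mul_eq_mul_div, le_div_iff₀ hpos]
  linarith

theorem sum_abs_le_mul_sum_abs_multilinearEval {m : ℕ} (g : (Fin m → Bool) → ℝ)
    (t : Fin m → Bool → ℝ) (ht0 : ∀ i, 0 ≤ t i false) (ht : ∀ i, t i false < t i true) :
    ∑ υ, |g υ| ≤ (∏ i, (1 + t i true) / (t i true - t i false)) *
      ∑ υ : Fin m → Bool, |multilinearEval g fun i => t i (υ i)| := by
  induction m with
  | zero => simp [multilinearEval]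
  | succ m ih =>
    set g₀ : (Fin m → Bool) → ℝ := fun w => g (Fin.cons false w)
    set g₁ : (Fin m → Bool) → ℝ := fun w => g (Fin.cons true w)
    set t' : Fin m → Bool → ℝ := fun i => t i.succ
    set C' := ∏ i, (1 + t' i true) / (t' i true - t' i false)
    have hC' : 0 ≤ C' := prod_nonneg fun i _ => (div_pos (by linarith [ht0 i.succ, ht i.succ])
      (sub_pos.mpr (ht i.succ))).le
    have eval_cons (c : Bool) (υ : Fin m → Bool) :
        multilinearEval g (fun i => t i ((Fin.cons c υ : Fin (m + 1) → Bool) i)) =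
          multilinearEval g₀ (fun i => t' i (υ i)) +
            multilinearEval g₁ (fun i => t' i (υ i)) * t 0 c := by
      rw [← multilinearEval_cons]
      congr 1
      ext i
      cases i using Fin.cases <;> rfl
    calc ∑ υ, |g υ| = ∑ υ, |g₀ υ| + ∑ υ, |g₁ υ| := by
          rw [Fintype.sum_bool_fun_fin_succ, sum_add_distrib]
      _ ≤ C' * ∑ υ : Fin m → Bool, |multilinearEval g₀ fun i => t' i (υ i)| +
            C' * ∑ υ : Fin m → Bool, |multilinearEval g₁ fun i => t' i (υ i)| :=
          add_le_add (ih g₀ t' (fun i => ht0 i.succ) fun i => ht i.succ)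
            (ih g₁ t' (fun i => ht0 i.succ) fun i => ht i.succ)
      _ = C' * ∑ υ : Fin m → Bool, (|multilinearEval g₀ fun i => t' i (υ i)| +
            |multilinearEval g₁ fun i => t' i (υ i)|) := by rw [sum_add_distrib, mul_add]
      _ ≤ C' * ∑ υ : Fin m → Bool, (1 + t 0 true) / (t 0 true - t 0 false) *
            (|multilinearEval g fun i => t i ((Fin.cons false υ : Fin (m + 1) → Bool) i)| +
              |multilinearEval g fun i => t i ((Fin.cons true υ : Fin (m + 1) → Bool) i)|) := by
          gcongr with υ
          rw [eval_cons, eval_cons]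
          exact abs_add_abs_le_of_affine_at_two_points (ht0 0) (ht 0)
      _ = _ := by
          rw [Fintype.sum_bool_fun_fin_succ (fun υ => |multilinearEval g fun i => t i (υ i)|),
            Fin.prod_univ_succ, ← mul_sum]
          ring

/-- Inequality bounding the coefficient sum of a multilinear polynomial by its
values at `2^m` points. -/
theorem multilinear_coeff_bound (m : ℕ) (g : (Fin m → Bool) → ℝ) (t : Fin m → Bool → ℝ)
    (ht0 : ∀ i, 0 < t i false) (ht : ∀ i, t i false < t i true) :
    ∑ υ : Fin m → Bool, |g υ| ≤
      (∏ i, (1 + t i true) / (t i true - t i false)) *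
        ∑ υ : Fin m → Bool,
          |∑ w : Fin m → Bool, g w * ∏ i, (if w i then t i (υ i) else 1)| :=
  sum_abs_le_mul_sum_abs_multilinearEval g t (fun i => (ht0 i).le) ht
end

section
/- Let $\kappa$ and $\kappa'$ be probability measures on $\{0,1\}^m$. For any real numbers $0<t_{i,0}<t_{i,1}$, $i=1,\dots,m$, the total variation distance satisfies $d_{TV}(\kappa,\kappa') \le \frac{1}{2}\prod_{i=1}^m\frac{1+t_{i,1}}{t_{i,1}-t_{i,0}}\sum_{\upsilon_1,\dots,\upsilon_m\in\{0,1\}}\left|\mathbb{E}_{\kappa}\left[\prod_{i=1}^m t_{i,\upsilon_i}^{\tau_i}\right]-\mathbb{E}_{\kappa'}\left[\prod_{i=1}^m t_{i,\upsilon_i}^{\tau_i}\right]\right|$, where $\tau_i\in\{0,1\}$ denotes the $i$-th coordinate. -/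
/-!
The joint generating functions of a signed measure `f` on `{0,1}^m`, evaluated at the `2^m`
points `(t_{i,υ_i})_i`, form the vector `V f`, where `V` is the Kronecker product of the `2 × 2`
Vandermonde matrices `V_i = (t_{i,υ}^τ)_{υ,τ}`. Hence `f = W (V f)` with `W` the Kronecker product
of the inverses `V_i⁻¹`, and `‖f‖₁ ≤ ‖W‖_{1→1} ‖V f‖₁`. The `1 → 1` operator norm (maximal absolute
column sum) is multiplicative under Kronecker products, and for `0 < t_{i,0} < t_{i,1}` that of
`V_i⁻¹` is `(1 + t_{i,1}) / (t_{i,1} - t_{i,0})`.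
-/

open Finset

namespace Matrix

section PiKronecker

variable {ι R : Type*} [Fintype ι] {α β γ : ι → Type*}

def piKronecker [CommMonoid R] (A : ∀ i, Matrix (α i) (β i) R) :
    Matrix (∀ i, α i) (∀ i, β i) R :=
  of fun x y => ∏ i, A i (x i) (y i)

theorem piKronecker_apply [CommMonoid R] (A : ∀ i, Matrix (α i) (β i) R) (x : ∀ i, α i)
    (y : ∀ i, β i) : piKronecker A x y = ∏ i, A i (x i) (y i) :=
  rfl

theorem piKronecker_mul [DecidableEq ι] [CommSemiring R] [∀ i, Fintype (β i)]
    (A : ∀ i, Matrix (α i) (β i) R) (B : ∀ i, Matrix (β i) (γ i) R) :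
    piKronecker A * piKronecker B = piKronecker fun i => A i * B i := by
  ext x z
  simp only [mul_apply, piKronecker_apply, Fintype.prod_sum, ← prod_mul_distrib]

theorem piKronecker_one [CommSemiring R] [∀ i, DecidableEq (α i)] :
    piKronecker (fun i => (1 : Matrix (α i) (α i) R)) = 1 := by
  ext x y
  simp only [piKronecker_apply, one_apply, Fintype.prod_boole, funext_iff]

theorem sum_abs_piKronecker_apply [DecidableEq ι] [CommRing R] [LinearOrder R]
    [IsStrictOrderedRing R] [∀ i, Fintype (α i)] (A : ∀ i, Matrix (α i) (β i) R)
    (y : ∀ i, β i) :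
    ∑ x, |piKronecker A x y| = ∏ i, ∑ a, |A i a (y i)| := by
  simp only [piKronecker_apply, abs_prod, Fintype.prod_sum]

end PiKronecker

theorem sum_abs_mulVec_le {m n R : Type*} [Fintype m] [Fintype n] [CommRing R] [LinearOrder R]
    [IsStrictOrderedRing R] (A : Matrix m n R) (v : n → R) {C : R}
    (hA : ∀ j, ∑ i, |A i j| ≤ C) : ∑ i, |(A *ᵥ v) i| ≤ C * ∑ j, |v j| := by
  calc ∑ i, |(A *ᵥ v) i| ≤ ∑ i, ∑ j, |A i j| * |v j| := by
        gcongr with i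
        simpa only [mulVec, dotProduct, abs_mul] using
          abs_sum_le_sum_abs (fun j => A i j * v j) univ
    _ = ∑ j, (∑ i, |A i j|) * |v j| := by rw [sum_comm]; simp only [sum_mul]
    _ ≤ ∑ j, C * |v j| := by gcongr with j; exact hA j
    _ = C * ∑ j, |v j| := by rw [mul_sum]

end Matrix

open Matrix

/-- The Vandermonde matrix `(s υ ^ τ)_{υ,τ}`, with exponents `τ ∈ {0,1}` encoded as booleans. -/
def boolVandermonde (s : Bool → ℝ) : Matrix Bool Bool ℝ :=
  of fun υ τ => if τ then s υ else 1

/-- The inverse of `boolVandermonde s`: its adjugate divided by its determinant. -/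
noncomputable def boolVandermondeInv (s : Bool → ℝ) : Matrix Bool Bool ℝ :=
  of fun τ υ =>
    (if τ then (if υ then 1 else -1) else (if υ then -s false else s true)) / (s true - s false)

theorem boolVandermondeInv_mul {s : Bool → ℝ} (hs : s false ≠ s true) :
    boolVandermondeInv s * boolVandermonde s = 1 := by
  have hd : s true - s false ≠ 0 := sub_ne_zero.2 hs.symm
  ext τ σ
  cases τ <;> cases σ <;>
    simp only [mul_apply, Fintype.sum_bool, boolVandermondeInv, boolVandermonde, of_apply,
      one_apply_eq, one_apply_ne, ne_eq, Bool.false_eq_true, Bool.true_eq_false,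
      not_false_eq_true, if_true, if_false] <;>
    field_simp <;> ring

theorem sum_abs_boolVandermondeInv_apply_le {s : Bool → ℝ} (hs0 : 0 < s false)
    (hs : s false < s true) (υ : Bool) :
    ∑ τ, |boolVandermondeInv s τ υ| ≤ (1 + s true) / (s true - s false) := by
  have hd : 0 < s true - s false := sub_pos.2 hs
  rw [Fintype.sum_bool]
  cases υ <;> simp only [boolVandermondeInv, of_apply, abs_div, abs_neg, abs_one, abs_of_pos hd,
    abs_of_pos hs0, abs_of_pos (hs0.trans hs), ← add_div, Bool.false_eq_true, if_true, if_false]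
  · rw [add_comm]
  · gcongr

theorem piKronecker_boolVandermonde_mulVec {m : ℕ} (t : Fin m → Bool → ℝ)
    (f : (Fin m → Bool) → ℝ) (υ : Fin m → Bool) :
    ((piKronecker fun i => boolVandermonde (t i)) *ᵥ f) υ =
      ∑ τ, f τ * ∏ i, (if τ i then t i (υ i) else 1) := by
  simp only [mulVec, dotProduct, piKronecker_apply, boolVandermonde, of_apply, mul_comm]

theorem tv_distance_le_generating_functions_general (m : ℕ) (κ κ' : (Fin m → Bool) → ℝ)
    (t : Fin m → Bool → ℝ) (ht0 : ∀ i, 0 < t i false) (ht : ∀ i, t i false < t i true) :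
    (1/2) * ∑ x, |κ x - κ' x| ≤
      (1/2) * (∏ i, (1 + t i true) / (t i true - t i false)) *
        ∑ υ : Fin m → Bool,
          |(∑ τ, κ τ * ∏ i, (if τ i then t i (υ i) else 1)) -
            ∑ τ, κ' τ * ∏ i, (if τ i then t i (υ i) else 1)| := by
  set V := piKronecker fun i => boolVandermonde (t i)
  set W := piKronecker fun i => boolVandermondeInv (t i)
  have hWV : W * V = 1 := by
    simp only [W, V, piKronecker_mul, boolVandermondeInv_mul (ht _).ne, piKronecker_one]
  have hW : ∀ υ, ∑ τ, |W τ υ| ≤ ∏ i, (1 + t i true) / (t i true - t i false) := fun υ => by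
    rw [sum_abs_piKronecker_apply]
    exact prod_le_prod (fun i _ => by positivity)
      fun i _ => sum_abs_boolVandermondeInv_apply_le (ht0 i) (ht i) (υ i)
  have hinv : κ - κ' = W *ᵥ (V *ᵥ (κ - κ')) := by rw [mulVec_mulVec, hWV, one_mulVec]
  calc (1/2) * ∑ x, |κ x - κ' x| = (1/2) * ∑ x, |(W *ᵥ (V *ᵥ (κ - κ'))) x| := by
        rw [← hinv]; rfl
    _ ≤ (1/2) * ((∏ i, (1 + t i true) / (t i true - t i false)) *
          ∑ υ, |(V *ᵥ (κ - κ')) υ|) := by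
        gcongr; exact sum_abs_mulVec_le W _ hW
    _ = _ := by
        rw [mul_assoc, mulVec_sub]
        simp only [Pi.sub_apply, V, piKronecker_boolVandermonde_mulVec]

/-- Bound on the total variation distance of two probability measures on `{0,1}^m`
by differences of their joint generating functions. -/
theorem tv_distance_le_generating_functions (m : ℕ) (κ κ' : (Fin m → Bool) → ℝ)
    (hκ : ∀ x, 0 ≤ κ x) (hκ' : ∀ x, 0 ≤ κ' x)
    (hs : ∑ x, κ x = 1) (hs' : ∑ x, κ' x = 1)
    (t : Fin m → Bool → ℝ) (ht0 : ∀ i, 0 < t i false) (ht : ∀ i, t i false < t i true) :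
    (1/2) * ∑ x, |κ x - κ' x| ≤
      (1/2) * (∏ i, (1 + t i true) / (t i true - t i false)) *
        ∑ υ : Fin m → Bool,
          |(∑ τ, κ τ * ∏ i, (if τ i then t i (υ i) else 1)) -
            ∑ τ, κ' τ * ∏ i, (if τ i then t i (υ i) else 1)| :=
  tv_distance_le_generating_functions_general m κ κ' t ht0 ht
end
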